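/- arXiv:math-ph/0412088 — 4 statements merged into one kernel-verified Lean document; each statement's English description precedes it below -/
import Mathlib

section
/- Let m ≥ 1 and λ₁,…,λ_m > 0; set Λ = Σ_{k=1}^m √λ_k and w_P(y) = exp(−½ Σ_{k=1}^m √λ_k y_k²) for y ∈ ℝᵐ. Then for any real coefficients (c_{ijk})_{1 ≤ i ≤ j ≤ k ≤ m} there exists a polynomial q on ℝᵐ of total degree at most 3 such that the function w₁ = q · w_P satisfies, for all y ∈ ℝᵐ, −Δw₁(y) + (Σ_{k=1}^m λ_k y_k²) w₁(y) − Λ w₁(y) + (Σ_{1 ≤ i ≤ j ≤ k ≤ m} c_{ijk} y_i y_j y_k) w_P(y) = 0. -/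
/-!
With `μₖ = √λₖ` and `w = exp(-½ ∑ₖ μₖ yₖ²)`, one has `Δ(q w) = (Δq - 2 ∑ₖ μₖ yₖ ∂ₖq +
∑ₖ (μₖ² yₖ² - μₖ) q) w` for every polynomial `q`, so the equation reduces to
`(Δ - 2E) q = (cubic forcing)` with the weighted Euler operator `E = ∑ₖ μₖ Xₖ ∂ₖ`.
On monomials `E` acts diagonally, `E (Xᵢ Xⱼ Xₖ) = (μᵢ + μⱼ + μₖ) Xᵢ Xⱼ Xₖ` and `E Xₖ = μₖ Xₖ`, with
positive eigenvalues, while `Δ` lowers the degree by two; hence every cubic monomial has an explicit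
preimage of degree three under `Δ - 2E`.
-/

open Real

/-- The Euclidean Laplacian on `ℝᵐ`: `Δu(x) = ∑ i, ∂²u/∂xᵢ²(x)`. -/
noncomputable def laplacian {m : ℕ} (u : (Fin m → ℝ) → ℝ) (x : Fin m → ℝ) : ℝ :=
  ∑ i, iteratedDeriv 2 (fun t => u (Function.update x i t)) (x i)

open MvPolynomial

section PolynomialOperators

variable {σ R : Type*} [Fintype σ] [CommRing R]

noncomputable def polyLaplacian : MvPolynomial σ R →ₗ[R] MvPolynomial σ R :=
  ∑ l, (pderiv l).toLinearMap ∘ₗ (pderiv l).toLinearMap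

lemma polyLaplacian_apply (f : MvPolynomial σ R) :
    polyLaplacian f = ∑ l, pderiv l (pderiv l f) := by
  simp [polyLaplacian]

noncomputable def weightedEuler (μ : σ → R) : Derivation R (MvPolynomial σ R) (MvPolynomial σ R) :=
  ∑ l, (C (μ l) * X l) • pderiv l

lemma weightedEuler_apply (μ : σ → R) (f : MvPolynomial σ R) :
    weightedEuler μ f = ∑ l, C (μ l) * X l * pderiv l f := by
  rw [weightedEuler, ← Derivation.coeFnAddMonoidHom_apply, map_sum, Finset.sum_apply]
  rfl

noncomputable def ornsteinUhlenbeck (μ : σ → R) : MvPolynomial σ R →ₗ[R] MvPolynomial σ R :=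
  polyLaplacian - (2 : R) • (weightedEuler μ).toLinearMap

lemma ornsteinUhlenbeck_apply (μ : σ → R) (f : MvPolynomial σ R) :
    ornsteinUhlenbeck μ f = polyLaplacian f - (2 : R) • weightedEuler μ f := rfl

lemma polyLaplacian_mul (f g : MvPolynomial σ R) :
    polyLaplacian (f * g) =
      polyLaplacian f * g + 2 * ∑ l, pderiv l f * pderiv l g + f * polyLaplacian g := by
  simp only [polyLaplacian_apply, Derivation.leibniz, smul_eq_mul, map_add, Finset.mul_sum,
    Finset.sum_mul, ← Finset.sum_add_distrib]
  refine Finset.sum_congr rfl fun l _ => ?_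
  ring

lemma polyLaplacian_X (k : σ) : polyLaplacian (X k : MvPolynomial σ R) = 0 := by
  classical
  simp [polyLaplacian_apply, pderiv_X, Pi.single_apply, apply_ite]

lemma sum_pderiv_mul_pderiv_X [DecidableEq σ] (f : MvPolynomial σ R) (k : σ) :
    ∑ l, pderiv l f * pderiv l (X k) = pderiv k f := by
  simp [pderiv_X, Pi.single_apply]

lemma polyLaplacian_X_mul_X_mul_X [DecidableEq σ] (i j k : σ) :
    polyLaplacian (X i * X j * X k : MvPolynomial σ R) = (2 : R) •
      ((if i = j then X k else 0) + (if i = k then X j else 0) + (if j = k then X i else 0)) := by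
  rw [polyLaplacian_mul, polyLaplacian_mul, sum_pderiv_mul_pderiv_X, sum_pderiv_mul_pderiv_X]
  simp only [polyLaplacian_X, Derivation.leibniz, pderiv_X, Pi.single_apply, smul_eq_mul]
  split_ifs <;> subst_vars <;> simp only [two_smul] <;> ring

lemma weightedEuler_X (μ : σ → R) (k : σ) : weightedEuler μ (X k) = μ k • X k := by
  classical
  simp [weightedEuler_apply, pderiv_X, Pi.single_apply, smul_eq_C_mul]

lemma weightedEuler_X_mul_X_mul_X (μ : σ → R) (i j k : σ) :
    weightedEuler μ (X i * X j * X k) = (μ i + μ j + μ k) • (X i * X j * X k) := by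
  simp only [Derivation.leibniz, weightedEuler_X, smul_eq_C_mul, map_add]
  ring

lemma ornsteinUhlenbeck_X (μ : σ → R) (k : σ) :
    ornsteinUhlenbeck μ (X k) = (-2 * μ k) • X k := by
  rw [ornsteinUhlenbeck_apply, polyLaplacian_X, weightedEuler_X, smul_smul]
  module

lemma ornsteinUhlenbeck_X_mul_X_mul_X [DecidableEq σ] (μ : σ → R) (i j k : σ) :
    ornsteinUhlenbeck μ (X i * X j * X k) = (2 : R) •
      ((if i = j then X k else 0) + (if i = k then X j else 0) + (if j = k then X i else 0))
      - (2 * (μ i + μ j + μ k)) • (X i * X j * X k) := by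
  rw [ornsteinUhlenbeck_apply, polyLaplacian_X_mul_X_mul_X, weightedEuler_X_mul_X_mul_X, smul_smul]

/-- `e^φ ∘ ∂ᵢ ∘ e^(-φ)` for `φ = ½ ∑ₖ μₖ Xₖ²`. -/
noncomputable def conjPderiv (μ : σ → R) (i : σ) (q : MvPolynomial σ R) : MvPolynomial σ R :=
  pderiv i q - C (μ i) * X i * q

lemma sum_conjPderiv_conjPderiv (μ : σ → R) (q : MvPolynomial σ R) :
    ∑ i, conjPderiv μ i (conjPderiv μ i q) =
      ornsteinUhlenbeck μ q + (∑ i, (C (μ i) ^ 2 * X i ^ 2 - C (μ i))) * q := by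
  simp only [conjPderiv, ornsteinUhlenbeck_apply, polyLaplacian_apply, weightedEuler_apply,
    Finset.smul_sum, Finset.sum_mul, ← Finset.sum_sub_distrib, ← Finset.sum_add_distrib]
  refine Finset.sum_congr rfl fun i _ => ?_
  simp only [map_sub, Derivation.leibniz, pderiv_C, pderiv_X_self, smul_eq_mul, two_smul]
  ring

end PolynomialOperators

section GaussianConjugation

variable {m : ℕ}

noncomputable def gaussian (μ : Fin m → ℝ) (z : Fin m → ℝ) : ℝ :=
  Real.exp (-(1/2) * ∑ k, μ k * z k ^ 2)

lemma hasDerivAt_eval_update (q : MvPolynomial (Fin m) ℝ) (y : Fin m → ℝ) (i : Fin m) (t : ℝ) :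
    HasDerivAt (fun s => eval (Function.update y i s) q)
      (eval (Function.update y i t) (pderiv i q)) t := by
  induction q using MvPolynomial.induction_on with
  | C a => simpa using hasDerivAt_const t a
  | add p r hp hr => simpa using hp.fun_add hr
  | mul_X p k hp =>
    simp only [eval_mul, eval_X, Derivation.leibniz, smul_eq_mul, map_add]
    by_cases hk : k = i
    · subst hk
      simp only [Function.update_self, pderiv_X_self, map_one]
      exact (hp.fun_mul (hasDerivAt_id' t)).congr_deriv (by ring)
    · simp only [Function.update_of_ne hk, pderiv_X_of_ne hk, map_zero]
      exact (hp.mul_const (y k)).congr_deriv (by ring)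

lemma sum_mul_update_sq (μ y : Fin m → ℝ) (i : Fin m) (t : ℝ) :
    ∑ k, μ k * Function.update y i t k ^ 2 = μ i * t ^ 2 - μ i * y i ^ 2 + ∑ k, μ k * y k ^ 2 := by
  rw [← Finset.add_sum_erase _ _ (Finset.mem_univ i),
    ← Finset.add_sum_erase _ _ (Finset.mem_univ i),
    Finset.sum_congr rfl fun k hk => by rw [Function.update_of_ne (Finset.ne_of_mem_erase hk)],
    Function.update_self]
  ring

lemma hasDerivAt_gaussian_update (μ y : Fin m → ℝ) (i : Fin m) (t : ℝ) :
    HasDerivAt (fun s => gaussian μ (Function.update y i s))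
      (-(μ i * t) * gaussian μ (Function.update y i t)) t := by
  simp only [gaussian, sum_mul_update_sq]
  have h : HasDerivAt (fun s => -(1/2) * (μ i * s ^ 2 - μ i * y i ^ 2 + ∑ k, μ k * y k ^ 2))
      (-(μ i * t)) t :=
    ((((hasDerivAt_pow 2 t).const_mul (μ i)).sub_const (μ i * y i ^ 2)).add_const
      (∑ k, μ k * y k ^ 2) |>.const_mul (-(1/2))).congr_deriv (by ring)
  simpa [mul_comm] using h.exp

lemma deriv_eval_update_mul_gaussian (μ : Fin m → ℝ) (q : MvPolynomial (Fin m) ℝ)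
    (y : Fin m → ℝ) (i : Fin m) :
    deriv (fun s => eval (Function.update y i s) q * gaussian μ (Function.update y i s)) =
      fun s => eval (Function.update y i s) (conjPderiv μ i q)
        * gaussian μ (Function.update y i s) := by
  funext t
  rw [((hasDerivAt_eval_update q y i t).fun_mul (hasDerivAt_gaussian_update μ y i t)).deriv]
  simp only [conjPderiv, map_sub, map_mul, eval_C, eval_X, Function.update_self]
  ring

lemma iteratedDeriv_two_eval_update_mul_gaussian (μ : Fin m → ℝ) (q : MvPolynomial (Fin m) ℝ)
    (y : Fin m → ℝ) (i : Fin m) :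
    iteratedDeriv 2 (fun s => eval (Function.update y i s) q * gaussian μ (Function.update y i s))
      (y i) = eval y (conjPderiv μ i (conjPderiv μ i q)) * gaussian μ y := by
  rw [iteratedDeriv_succ, iteratedDeriv_one, deriv_eval_update_mul_gaussian,
    deriv_eval_update_mul_gaussian]
  simp only [Function.update_eq_self]

lemma laplacian_eval_mul_gaussian (μ : Fin m → ℝ) (q : MvPolynomial (Fin m) ℝ)
    (y : Fin m → ℝ) :
    laplacian (fun z => eval z q * gaussian μ z) y =
      (eval y (ornsteinUhlenbeck μ q) + (∑ k, (μ k ^ 2 * y k ^ 2 - μ k)) * eval y q)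
        * gaussian μ y := by
  simp only [laplacian, iteratedDeriv_two_eval_update_mul_gaussian, ← Finset.sum_mul]
  rw [← map_sum, sum_conjPderiv_conjPderiv]
  simp [map_sum]

end GaussianConjugation

section CubicCorrector

variable {σ R : Type*} [DecidableEq σ] [Field R]

/-- `-(2s)⁻¹ • (p + ½ E⁻¹ (Δ p))` for `p = Xᵢ Xⱼ Xₖ`, `s = μᵢ + μⱼ + μₖ`, `E = weightedEuler μ`:
`(Δ - 2E) p = Δ p - 2 s p`, and `Δ - 2E = -2E` on the linear polynomial `Δ p`. -/
noncomputable def cubicCorrector (μ : σ → R) (i j k : σ) : MvPolynomial σ R :=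
  (-(2 * (μ i + μ j + μ k))⁻¹) • (X i * X j * X k + (if i = j then (μ k)⁻¹ • X k else 0)
    + (if i = k then (μ j)⁻¹ • X j else 0) + (if j = k then (μ i)⁻¹ • X i else 0))

lemma ornsteinUhlenbeck_cubicCorrector [Fintype σ] [CharZero R] {μ : σ → R} (hμ : ∀ l, μ l ≠ 0)
    {i j k : σ} (hs : μ i + μ j + μ k ≠ 0) :
    ornsteinUhlenbeck μ (cubicCorrector μ i j k) = X i * X j * X k := by
  have hcorr : ornsteinUhlenbeck μ (X i * X j * X k + (if i = j then (μ k)⁻¹ • X k else 0)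
      + (if i = k then (μ j)⁻¹ • X j else 0) + (if j = k then (μ i)⁻¹ • X i else 0))
      = (-(2 * (μ i + μ j + μ k))) • (X i * X j * X k) := by
    simp only [map_smul, map_add, apply_ite (ornsteinUhlenbeck μ), map_zero,
      ornsteinUhlenbeck_X, ornsteinUhlenbeck_X_mul_X_mul_X, smul_smul]
    have := hμ i; have := hμ j; have := hμ k
    split_ifs <;> subst_vars <;> match_scalars <;> field_simp <;> ring
  have h2s : -(2 * (μ i + μ j + μ k)) ≠ 0 := neg_ne_zero.2 (mul_ne_zero two_ne_zero hs)
  rw [cubicCorrector, map_smul, hcorr, smul_smul, neg_inv, inv_mul_cancel₀ h2s, one_smul]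

lemma totalDegree_cubicCorrector_le (μ : σ → R) (i j k : σ) :
    (cubicCorrector μ i j k).totalDegree ≤ 3 := by
  have hX : ∀ (a : R) (l : σ), (a • X l : MvPolynomial σ R).totalDegree ≤ 3 := fun a l =>
    (totalDegree_smul_le _ _).trans (by simp [totalDegree_X])
  have hXXX : (X i * X j * X k : MvPolynomial σ R).totalDegree ≤ 3 :=
    (((isHomogeneous_X R i).mul (isHomogeneous_X R j)).mul (isHomogeneous_X R k)).totalDegree_le
  refine (totalDegree_smul_le _ _).trans ?_
  refine (totalDegree_add _ _).trans (max_le ((totalDegree_add _ _).trans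
    (max_le ((totalDegree_add _ _).trans (max_le hXXX ?_)) ?_)) ?_) <;>
    split_ifs <;> simp [hX]

lemma exists_ornsteinUhlenbeck_eq_cubic [Fintype σ] [CharZero R] {μ : σ → R}
    (hμ : ∀ l, μ l ≠ 0) (hs : ∀ i j k, μ i + μ j + μ k ≠ 0) (c : σ → σ → σ → R) :
    ∃ q : MvPolynomial σ R, q.totalDegree ≤ 3 ∧
      ornsteinUhlenbeck μ q = ∑ i, ∑ j, ∑ k, c i j k • (X i * X j * X k) := by
  refine ⟨∑ i, ∑ j, ∑ k, c i j k • cubicCorrector μ i j k, ?_, ?_⟩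
  · refine totalDegree_finsetSum_le fun i _ => totalDegree_finsetSum_le fun j _ =>
      totalDegree_finsetSum_le fun k _ => ?_
    exact (totalDegree_smul_le _ _).trans (totalDegree_cubicCorrector_le μ i j k)
  · simp only [map_sum, map_smul, ornsteinUhlenbeck_cubicCorrector hμ (hs _ _ _)]

end CubicCorrector

theorem stmt_6_general (m : ℕ) (lam : Fin m → ℝ) (hlam : ∀ i, 0 < lam i)
    (Λ : ℝ) (hΛ : Λ = ∑ k, Real.sqrt (lam k))
    (wP : (Fin m → ℝ) → ℝ)
    (hwP : ∀ y, wP y = Real.exp (-(1/2) * ∑ k, Real.sqrt (lam k) * (y k)^2))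
    (c : Fin m → Fin m → Fin m → ℝ) :
    ∃ q : MvPolynomial (Fin m) ℝ, q.totalDegree ≤ 3 ∧
      ∀ y : Fin m → ℝ,
        -(laplacian (fun z => MvPolynomial.eval z q * wP z) y)
          + (∑ k, lam k * (y k)^2) * (MvPolynomial.eval y q * wP y)
          - Λ * (MvPolynomial.eval y q * wP y)
          + (∑ i, ∑ j, ∑ k,
              if i ≤ j ∧ j ≤ k then c i j k * y i * y j * y k else 0) * wP y
          = 0 := by
  set μ : Fin m → ℝ := fun k => Real.sqrt (lam k) with hμ
  have hμpos : ∀ k, 0 < μ k := fun k => Real.sqrt_pos.2 (hlam k)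
  obtain ⟨q, hdeg, hq⟩ := exists_ornsteinUhlenbeck_eq_cubic (fun k => (hμpos k).ne')
    (fun i j k => (add_pos (add_pos (hμpos i) (hμpos j)) (hμpos k)).ne')
    (fun i j k => if i ≤ j ∧ j ≤ k then c i j k else 0)
  refine ⟨q, hdeg, fun y => ?_⟩
  have hforcing : eval y (ornsteinUhlenbeck μ q) =
      ∑ i, ∑ j, ∑ k, if i ≤ j ∧ j ≤ k then c i j k * y i * y j * y k else 0 := by
    simp [hq, map_sum, ite_smul, apply_ite, mul_assoc]
  have hpotential : ∑ k, (μ k ^ 2 * y k ^ 2 - μ k) = ∑ k, lam k * y k ^ 2 - Λ := by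
    simp [hμ, Finset.sum_sub_distrib, Real.sq_sqrt (hlam _).le, hΛ]
  rw [show wP = gaussian μ from funext hwP, laplacian_eval_mul_gaussian, hpotential, hforcing]
  ring

theorem stmt_6 (m : ℕ) (hm : 1 ≤ m) (lam : Fin m → ℝ) (hlam : ∀ i, 0 < lam i)
    (Λ : ℝ) (hΛ : Λ = ∑ k, Real.sqrt (lam k))
    (wP : (Fin m → ℝ) → ℝ)
    (hwP : ∀ y, wP y = Real.exp (-(1/2) * ∑ k, Real.sqrt (lam k) * (y k)^2))
    (c : Fin m → Fin m → Fin m → ℝ) :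
    ∃ q : MvPolynomial (Fin m) ℝ, q.totalDegree ≤ 3 ∧
      ∀ y : Fin m → ℝ,
        -(laplacian (fun z => MvPolynomial.eval z q * wP z) y)
          + (∑ k, lam k * (y k)^2) * (MvPolynomial.eval y q * wP y)
          - Λ * (MvPolynomial.eval y q * wP y)
          + (∑ i, ∑ j, ∑ k,
              if i ≤ j ∧ j ≤ k then c i j k * y i * y j * y k else 0) * wP y
          = 0 :=
  stmt_6_general m lam hlam Λ hΛ wP hwP c
end

section
/- Let λ > 0 and μ ∈ ℝ. Define z : ℝ × [0,∞) → ℝ by z(x,t) = (cosh(t√(2λ)))^{−1/2} · exp( −(√λ/√2) · tanh(t√(2λ)) · (x + μ/2)² + λμ²t/4 ). Then z(x,0) = 1 for all x ∈ ℝ; z satisfies ∂z/∂t (x,t) = ½ ∂²z/∂x² (x,t) − λ(x² + μx) z(x,t) for all x ∈ ℝ and t ≥ 0; and for each T > 0 the function z is bounded on ℝ × [0,T]. -/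
/-!
With `ω = √(2λ)` and `x² + μx = (x + μ/2)² - μ²/4`, the function `z` is the Mehler kernel
`K(y, t) = cosh(ωt)^(-1/2) · exp(-(ω/2) tanh(ωt) y²)` of the harmonic oscillator,
`∂ₜK = ½ ∂²ᵧK - (ω²/2) y² K`, taken at `y = x + μ/2` and multiplied by `exp(λμ²t/4)`, which absorbs
the constant `λμ²/4` of the potential. The kernel equation is a direct computation from
`tanh' = 1 - tanh²`, and for `t ≥ 0` the kernel takes values in `[0, 1]`.
-/

open Real

theorem Real.hasDerivAt_tanh (x : ℝ) : HasDerivAt tanh (1 - tanh x ^ 2) x := by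
  have h := (hasDerivAt_sinh x).div (hasDerivAt_cosh x) (cosh_pos x).ne'
  rw [show sinh / cosh = tanh from funext fun y => (tanh_eq_sinh_div_cosh y).symm] at h
  refine h.congr_deriv ?_
  rw [tanh_eq_sinh_div_cosh]
  field_simp

theorem Real.tanh_nonneg {x : ℝ} (hx : 0 ≤ x) : 0 ≤ tanh x := by
  rw [tanh_eq_sinh_div_cosh]
  exact div_nonneg (sinh_nonneg_iff.mpr hx) (cosh_pos x).le

theorem hasDerivAt_cosh_mul_rpow (ω p t : ℝ) :
    HasDerivAt (fun s => cosh (ω * s) ^ p) (p * ω * tanh (ω * t) * cosh (ω * t) ^ p) t := by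
  have hcosh := (cosh_pos (ω * t)).ne'
  have h := (((hasDerivAt_id t).const_mul ω).cosh).rpow_const (p := p) (Or.inl hcosh)
  simp only [id, mul_one] at h
  refine h.congr_deriv ?_
  rw [rpow_sub_one hcosh, tanh_eq_sinh_div_cosh]
  field_simp

theorem hasDerivAt_mul_exp_neg_mul_sq (C b y : ℝ) :
    HasDerivAt (fun y => C * exp (-b * y ^ 2)) (-2 * b * y * (C * exp (-b * y ^ 2))) y := by
  refine ((((hasDerivAt_pow 2 y).const_mul (-b)).exp).const_mul C).congr_deriv ?_
  push_cast
  ring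

theorem iteratedDeriv_two_mul_exp_neg_mul_sq (C b y : ℝ) :
    iteratedDeriv 2 (fun y => C * exp (-b * y ^ 2)) y
      = (4 * b ^ 2 * y ^ 2 - 2 * b) * (C * exp (-b * y ^ 2)) := by
  have hderiv : deriv (fun y => C * exp (-b * y ^ 2))
      = fun y => -2 * b * y * (C * exp (-b * y ^ 2)) :=
    funext fun y => (hasDerivAt_mul_exp_neg_mul_sq C b y).deriv
  have h := ((hasDerivAt_id' y).const_mul (-2 * b)).fun_mul
    (hasDerivAt_mul_exp_neg_mul_sq C b y)
  rw [iteratedDeriv_succ, iteratedDeriv_one, hderiv, h.deriv]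
  ring

noncomputable def oscillatorKernel (ω y t : ℝ) : ℝ :=
  cosh (ω * t) ^ (-(1 : ℝ) / 2) * exp (-(ω / 2 * tanh (ω * t)) * y ^ 2)

section oscillatorKernel

variable (ω : ℝ)

theorem oscillatorKernel_zero_time (y : ℝ) : oscillatorKernel ω y 0 = 1 := by
  simp [oscillatorKernel]

theorem iteratedDeriv_two_oscillatorKernel (y t : ℝ) :
    iteratedDeriv 2 (oscillatorKernel ω · t) y
      = (ω ^ 2 * tanh (ω * t) ^ 2 * y ^ 2 - ω * tanh (ω * t)) * oscillatorKernel ω y t := by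
  simp only [oscillatorKernel]
  rw [iteratedDeriv_two_mul_exp_neg_mul_sq]
  ring

theorem hasDerivAt_oscillatorKernel (y t : ℝ) :
    HasDerivAt (oscillatorKernel ω y)
      (-(ω / 2) * (tanh (ω * t) + ω * (1 - tanh (ω * t) ^ 2) * y ^ 2)
        * oscillatorKernel ω y t) t := by
  have htanh : HasDerivAt (fun s => tanh (ω * s)) ((1 - tanh (ω * t) ^ 2) * ω) t :=
    (hasDerivAt_tanh (ω * t)).comp t (hasDerivAt_const_mul ω)
  have hexponent : HasDerivAt (fun s => -(ω / 2 * tanh (ω * s)) * y ^ 2)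
      (-(ω / 2 * ((1 - tanh (ω * t) ^ 2) * ω)) * y ^ 2) t :=
    ((htanh.const_mul (ω / 2)).fun_neg).mul_const (y ^ 2)
  refine ((hasDerivAt_cosh_mul_rpow ω (-(1 : ℝ) / 2) t).fun_mul hexponent.exp).congr_deriv ?_
  simp only [oscillatorKernel]
  ring

theorem oscillatorKernel_heatEquation (y t : ℝ) :
    HasDerivAt (oscillatorKernel ω y)
      (1 / 2 * iteratedDeriv 2 (oscillatorKernel ω · t) y
        - ω ^ 2 / 2 * y ^ 2 * oscillatorKernel ω y t) t := by
  refine (hasDerivAt_oscillatorKernel ω y t).congr_deriv ?_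
  rw [iteratedDeriv_two_oscillatorKernel]
  ring

theorem oscillatorKernel_nonneg (y t : ℝ) : 0 ≤ oscillatorKernel ω y t :=
  mul_nonneg (rpow_nonneg (cosh_pos _).le _) (exp_nonneg _)

theorem oscillatorKernel_le_one (hω : 0 ≤ ω) (y : ℝ) {t : ℝ} (ht : 0 ≤ t) :
    oscillatorKernel ω y t ≤ 1 := by
  have hcosh : cosh (ω * t) ^ (-(1 : ℝ) / 2) ≤ 1 :=
    rpow_le_one_of_one_le_of_nonpos (one_le_cosh _) (by norm_num)
  have hexp : exp (-(ω / 2 * tanh (ω * t)) * y ^ 2) ≤ 1 := by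
    rw [exp_le_one_iff]
    have := tanh_nonneg (mul_nonneg hω ht)
    nlinarith [sq_nonneg y, mul_nonneg hω this]
  exact mul_le_one₀ hcosh (exp_nonneg _) hexp

end oscillatorKernel

theorem stmt_8 (lam mu : ℝ) (hlam : 0 < lam)
    (z : ℝ → ℝ → ℝ)
    (hz : ∀ x t, z x t
      = (Real.cosh (t * Real.sqrt (2 * lam))) ^ (-(1:ℝ)/2) *
        Real.exp (-(Real.sqrt lam / Real.sqrt 2)
            * Real.tanh (t * Real.sqrt (2 * lam)) * (x + mu/2)^2
          + lam * mu^2 * t / 4)) :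
    (∀ x, z x 0 = 1) ∧
    (∀ x t : ℝ, 0 ≤ t →
      deriv (fun s => z x s) t
        = (1/2) * iteratedDeriv 2 (fun y => z y t) x
          - lam * (x^2 + mu * x) * z x t) ∧
    (∀ T : ℝ, 0 < T → ∃ C : ℝ, ∀ x t : ℝ, 0 ≤ t → t ≤ T → |z x t| ≤ C) := by
  set ω := √(2 * lam) with hω
  have hω_sq : ω ^ 2 = 2 * lam := sq_sqrt (by positivity)
  have hω_half : √lam / √2 = ω / 2 := by
    rw [hω, sqrt_mul zero_le_two, div_eq_div_iff (by positivity) two_ne_zero]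
    linear_combination (-√lam) * sq_sqrt (zero_le_two : (0 : ℝ) ≤ 2)
  have hz_kernel :
      z = fun x t => oscillatorKernel ω (x + mu / 2) t * exp (lam * mu ^ 2 / 4 * t) := by
    ext x t
    rw [hz, oscillatorKernel, mul_assoc (cosh _ ^ _), ← exp_add, hω_half, mul_comm t ω]
    ring_nf
  subst hz_kernel
  refine ⟨fun x => by simp [oscillatorKernel_zero_time], fun x t _ => ?_, fun T _ => ?_⟩
  · have h := (oscillatorKernel_heatEquation ω (x + mu / 2) t).fun_mul
      ((hasDerivAt_const_mul (lam * mu ^ 2 / 4)).exp)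
    rw [h.deriv, iteratedDeriv_mul_const_field,
      iteratedDeriv_comp_add_const 2 (oscillatorKernel ω · t)]
    linear_combination (-(x + mu / 2) ^ 2 / 2 * oscillatorKernel ω (x + mu / 2) t
      * exp (lam * mu ^ 2 / 4 * t)) * hω_sq
  · refine ⟨exp (lam * mu ^ 2 / 4 * T), fun x t ht htT => ?_⟩
    rw [abs_of_nonneg (mul_nonneg (oscillatorKernel_nonneg ω _ _) (exp_nonneg _))]
    calc oscillatorKernel ω (x + mu / 2) t * exp (lam * mu ^ 2 / 4 * t)
        ≤ 1 * exp (lam * mu ^ 2 / 4 * T) :=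
          mul_le_mul (oscillatorKernel_le_one ω (sqrt_nonneg _) _ ht)
            (exp_le_exp.mpr (by gcongr)) (exp_nonneg _) zero_le_one
      _ = exp (lam * mu ^ 2 / 4 * T) := one_mul _
end

section
/- Let n ≥ 1, let μ > 0, let D be an n × n real matrix, and let A be an n × n real symmetric matrix satisfying A D + Dᵀ A = −μ A². Define L : ℝⁿ → ℝ by L(x) = ⟨A x, x⟩, so that its gradient is ∇L(x) = 2 A x. Then for every x ∈ ℝⁿ, (1/4) ‖∇L(x)‖² + (1/2) ⟨∇L(x), D x⟩ = (1 − μ/2) ‖A x‖². In particular, if 0 < μ < 2 and A is invertible, this quantity is strictly positive for every x ≠ 0. -/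
open Matrix

theorem stmt_13 (n : ℕ) (hn : 1 ≤ n) (μ : ℝ) (hμpos : 0 < μ)
    (D A : Matrix (Fin n) (Fin n) ℝ) (hA : A.IsSymm)
    (hLyap : A * D + Dᵀ * A = -(μ • (A * A)))
    (L : (Fin n → ℝ) → ℝ) (hL : ∀ x, L x = A.mulVec x ⬝ᵥ x)
    (gradL : (Fin n → ℝ) → (Fin n → ℝ)) (hgradL : ∀ x, gradL x = (2 : ℝ) • A.mulVec x) :
    (∀ x : Fin n → ℝ,
      (1/4) * (gradL x ⬝ᵥ gradL x) + (1/2) * (gradL x ⬝ᵥ D.mulVec x)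
        = (1 - μ/2) * (A.mulVec x ⬝ᵥ A.mulVec x)) ∧
    (μ < 2 → IsUnit A → ∀ x : Fin n → ℝ, x ≠ 0 →
      0 < (1/4) * (gradL x ⬝ᵥ gradL x) + (1/2) * (gradL x ⬝ᵥ D.mulVec x)) := by
  have key : ∀ x : Fin n → ℝ,
      2 * (A.mulVec x ⬝ᵥ D.mulVec x) = -μ * (A.mulVec x ⬝ᵥ A.mulVec x) := by
    intro x
    have h := congrArg (fun M : Matrix (Fin n) (Fin n) ℝ => x ⬝ᵥ M.mulVec x) hLyap
    simp only [add_mulVec, neg_mulVec, smul_mulVec, dotProduct_add,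
      dotProduct_neg, dotProduct_smul, ] at h
    simp only [← Matrix.mulVec_mulVec] at h
    have h1 : x ⬝ᵥ A.mulVec (D.mulVec x) = A.mulVec x ⬝ᵥ D.mulVec x := by
      rw [dotProduct_mulVec, ← mulVec_transpose, hA.eq]
    have h2 : x ⬝ᵥ Dᵀ.mulVec (A.mulVec x) = A.mulVec x ⬝ᵥ D.mulVec x := by
      rw [dotProduct_mulVec, vecMul_transpose, dotProduct_comm]
    have h3 : x ⬝ᵥ A.mulVec (A.mulVec x) = A.mulVec x ⬝ᵥ A.mulVec x := by
      rw [dotProduct_mulVec, ← mulVec_transpose, hA.eq]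
    rw [h1, h2, h3] at h
    simp only [smul_eq_mul] at h
    linarith
  have main : ∀ x : Fin n → ℝ,
      (1/4) * (gradL x ⬝ᵥ gradL x) + (1/2) * (gradL x ⬝ᵥ D.mulVec x)
        = (1 - μ/2) * (A.mulVec x ⬝ᵥ A.mulVec x) := by
    intro x
    rw [hgradL]
    simp only [smul_dotProduct, dotProduct_smul, smul_eq_mul]
    have := key x
    ring_nf
    ring_nf at this
    linarith
  refine ⟨main, fun hμ2 hAu x hx => ?_⟩
  rw [main x]
  have hAx : A.mulVec x ≠ 0 := fun h =>
    hx (by simpa using (Matrix.mulVec_injective_iff_isUnit.2 hAu) (h.trans (A.mulVec_zero).symm))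
  have : 0 < A.mulVec x ⬝ᵥ A.mulVec x := by
    simpa using Matrix.dotProduct_self_star_pos_iff.2 hAx
  nlinarith
end

section
/- Let C > 0 and ε ∈ (0, 1] with Cε ≤ 1, and let (M_n)_{n ∈ ℕ} be a sequence of nonnegative real numbers satisfying, for every integer n ≥ 2, M_{n+1} ≤ √(Cε) · M_n + Cε (n+1) · M_{n−1} + Cε (n+1)(n+2) · M_{n−2}. Then there is a function γ : ℕ → ℝ, depending only on n (and in particular independent of C, ε and the sequence), such that for every n ≥ 2, M_n ≤ γ(n) · (Cε)^{(n−2)/3} · max(M₀, M₁, M₂). -/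
noncomputable def gam : ℕ → ℝ
  | 0 => 1
  | 1 => 1
  | 2 => 1
  | (n+3) => gam (n+2) + (n+3) * gam (n+1) + (n+3) * (n+4) * gam n

lemma gam_nonneg : ∀ n, (0:ℝ) ≤ gam n
  | 0 => by norm_num [gam]
  | 1 => by norm_num [gam]
  | 2 => by norm_num [gam]
  | (n+3) => by
      have h0 := gam_nonneg n
      have h1 := gam_nonneg (n+1)
      have h2 := gam_nonneg (n+2)
      simp only [gam]
      positivity

theorem stmt_14 :
    ∃ γ : ℕ → ℝ, ∀ (C ε : ℝ), 0 < C → 0 < ε → ε ≤ 1 → C * ε ≤ 1 →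
      ∀ M : ℕ → ℝ, (∀ n, 0 ≤ M n) →
      (∀ n : ℕ, 2 ≤ n →
        M (n + 1) ≤ Real.sqrt (C * ε) * M n
          + C * ε * (n + 1) * M (n - 1)
          + C * ε * (n + 1) * (n + 2) * M (n - 2)) →
      ∀ n : ℕ, 2 ≤ n →
        M n ≤ γ n * (C * ε) ^ (((n : ℝ) - 2) / 3)
          * max (M 0) (max (M 1) (M 2)) := by
  refine ⟨gam, ?_⟩
  intro C ε hC hε hε1 hCε M hM hrec n hn
  set x := C * ε with hxdef
  have hx : 0 < x := mul_pos hC hε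
  set K := max (M 0) (max (M 1) (M 2)) with hKdef
  have hK : 0 ≤ K := le_trans (hM 0) (le_max_left _ _)
  have hM0 : M 0 ≤ K := le_max_left _ _
  have hM1 : M 1 ≤ K := le_trans (le_max_left _ _) (le_max_right _ _)
  have hM2 : M 2 ≤ K := le_trans (le_max_right _ _) (le_max_right _ _)
  have emono : ∀ a b : ℝ, b ≤ a → x ^ a ≤ x ^ b := fun a b h =>
    Real.rpow_le_rpow_of_exponent_ge hx hCε h
  have epos : ∀ a : ℝ, 0 < x ^ a := fun a => Real.rpow_pos_of_pos hx a
  have eone : ∀ a : ℝ, a ≤ 0 → 1 ≤ x ^ a := fun a ha =>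
    Real.one_le_rpow_of_pos_of_le_one_of_nonpos hx hCε ha
  have hxs : Real.sqrt x = x ^ (1/2 : ℝ) := Real.sqrt_eq_rpow x
  have base : ∀ k : ℕ, M k ≤ K → (((k:ℝ)-2)/3) ≤ 0 →
      M k ≤ 1 * x ^ (((k:ℝ)-2)/3) * K := fun k hk he => by
    rw [one_mul]; exact hk.trans (le_mul_of_one_le_left hK (eone _ he))
  clear hn
  induction n using Nat.strong_induction_on with
  | _ n ih =>
    match n, ih with
    | 0, _ =>
      have := base 0 hM0 (by norm_num)
      simpa [gam] using this
    | 1, _ =>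
      have := base 1 hM1 (by norm_num)
      simpa [gam] using this
    | 2, _ =>
      have := base 2 hM2 (by norm_num)
      simpa [gam] using this
    | (m+3), ih =>
      have h2 := ih (m+2) (by omega)
      have h1 := ih (m+1) (by omega)
      have h0 := ih m (by omega)
      have e2 : (((m+2 : ℕ) : ℝ) - 2) / 3 = (m : ℝ) / 3 := by push_cast; ring
      have e1 : (((m+1 : ℕ) : ℝ) - 2) / 3 = ((m : ℝ) - 1) / 3 := by push_cast; ring
      have e3 : (((m+3 : ℕ) : ℝ) - 2) / 3 = ((m : ℝ) + 1) / 3 := by push_cast; ring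
      rw [e2] at h2; rw [e1] at h1; rw [e3]
      have hr := hrec (m+2) (by omega)
      have hsub1 : m + 2 - 1 = m + 1 := by omega
      have hsub2 : m + 2 - 2 = m := by omega
      rw [hsub1, hsub2] at hr
      push_cast at hr
      -- bound each of the three terms
      have t1 : Real.sqrt x * M (m+2) ≤ gam (m+2) * x ^ (((m:ℝ)+1)/3) * K := by
        calc Real.sqrt x * M (m+2)
            ≤ Real.sqrt x * (gam (m+2) * x ^ ((m:ℝ)/3) * K) :=
              mul_le_mul_of_nonneg_left h2 (Real.sqrt_nonneg x)
          _ = gam (m+2) * x ^ ((1:ℝ)/2 + (m:ℝ)/3) * K := by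
              rw [hxs, Real.rpow_add hx]; ring
          _ ≤ gam (m+2) * x ^ (((m:ℝ)+1)/3) * K := by
              have := emono ((1:ℝ)/2 + (m:ℝ)/3) (((m:ℝ)+1)/3) (by linarith)
              exact mul_le_mul_of_nonneg_right
                (mul_le_mul_of_nonneg_left this (gam_nonneg _)) hK
      have t2 : x * ((m:ℝ)+2+1) * M (m+1)
          ≤ ((m:ℝ)+3) * gam (m+1) * x ^ (((m:ℝ)+1)/3) * K := by
        calc x * ((m:ℝ)+2+1) * M (m+1)
            ≤ x * ((m:ℝ)+2+1) * (gam (m+1) * x ^ (((m:ℝ)-1)/3) * K) := by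
              apply mul_le_mul_of_nonneg_left h1
              positivity
          _ = ((m:ℝ)+3) * gam (m+1) * x ^ (1 + ((m:ℝ)-1)/3) * K := by
              rw [Real.rpow_add hx, Real.rpow_one]; ring
          _ ≤ ((m:ℝ)+3) * gam (m+1) * x ^ (((m:ℝ)+1)/3) * K := by
              have := emono (1 + ((m:ℝ)-1)/3) (((m:ℝ)+1)/3) (by linarith)
              have hg : (0:ℝ) ≤ ((m:ℝ)+3) * gam (m+1) := by
                have := gam_nonneg (m+1); positivity
              exact mul_le_mul_of_nonneg_right
                (mul_le_mul_of_nonneg_left this hg) hK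
      have t3 : x * ((m:ℝ)+2+1) * ((m:ℝ)+2+2) * M m
          ≤ ((m:ℝ)+3) * ((m:ℝ)+4) * gam m * x ^ (((m:ℝ)+1)/3) * K := by
        calc x * ((m:ℝ)+2+1) * ((m:ℝ)+2+2) * M m
            ≤ x * ((m:ℝ)+2+1) * ((m:ℝ)+2+2) * (gam m * x ^ (((m:ℝ)-2)/3) * K) := by
              apply mul_le_mul_of_nonneg_left h0
              positivity
          _ = ((m:ℝ)+3) * ((m:ℝ)+4) * gam m * x ^ (1 + ((m:ℝ)-2)/3) * K := by
              rw [Real.rpow_add hx, Real.rpow_one]; ring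
          _ = ((m:ℝ)+3) * ((m:ℝ)+4) * gam m * x ^ (((m:ℝ)+1)/3) * K := by
              rw [show (1:ℝ) + ((m:ℝ)-2)/3 = ((m:ℝ)+1)/3 by ring]
      have hgam : gam (m+3) = gam (m+2) + ((m:ℝ)+3) * gam (m+1)
          + ((m:ℝ)+3) * ((m:ℝ)+4) * gam m := by
        simp only [gam]
      calc M (m+3) ≤ Real.sqrt x * M (m+2) + x * ((m:ℝ)+2+1) * M (m+1)
            + x * ((m:ℝ)+2+1) * ((m:ℝ)+2+2) * M m := hr
        _ ≤ gam (m+2) * x ^ (((m:ℝ)+1)/3) * K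
            + ((m:ℝ)+3) * gam (m+1) * x ^ (((m:ℝ)+1)/3) * K
            + ((m:ℝ)+3) * ((m:ℝ)+4) * gam m * x ^ (((m:ℝ)+1)/3) * K := by
              exact add_le_add (add_le_add t1 t2) t3
        _ = gam (m+3) * x ^ (((m:ℝ)+1)/3) * K := by rw [hgam]; ring
end
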